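/- Let q ≥ 3 be an odd integer and let Pₙ be the polynomials defined by P₀(x) = 1, P₁(x) = x, P_{n+1}(x) = ((q+1)/q)·x·Pₙ(x) − (1/q)·P_{n−1}(x). Then for every n ∈ ℕ and every s ∈ [−1,1), (1 − Pₙ(s))/(1 − s) ≤ P'ₙ(1), where P'ₙ denotes the derivative of Pₙ. (Equivalently, on the free group F_r with q = 2r − 1, ψ_s(x) ≤ ψ₁(x) for all s ∈ [−1,1] and all x ∈ F_r, where ψ_s(x) = (1 − φ_s(x))/(1 − s) and ψ₁(x) = P'_{|x|}(1).) -/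

import Mathlib

/-!
Put `Gₙ(s) = (1 - s) Pₙ'(1) - (1 - Pₙ(s))`. Differentiating the recurrence at `1`, where
`Pₙ(1) = 1`, gives `q G_{n+2} = (q + 1) G_{n+1} - Gₙ + (q + 1)(1 - s)(1 - P_{n+1}(s))`, so the
increments `Δₙ = G_{n+1} - Gₙ` satisfy `q Δ_{n+1} ≥ Δₙ` as long as `P_{n+1}(s) ≤ 1`. Since
`G₀ = G₁ = 0`, `G` is nondecreasing and hence nonnegative.

It remains to see `|Pₙ(s)| ≤ 1` on `[-1, 1]`, and by parity for `s ≥ 0`. If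
`((q + 1) s)² ≤ 4q`, the quadratic form `q y² - (q + 1) s x y + x²` is positive semidefinite and
its value at `(Pₙ, P_{n+1})` is `(1 - s²) / qⁿ`, which confines `P_{n+1}` once `|Pₙ| ≤ 1`.
Otherwise `r = (q + 1) s / (2q)` satisfies `1/q ≤ r²`, and for both sequences `uₙ = 1 ∓ Pₙ(s)` the
invariant `0 ≤ r uₙ ≤ u_{n+1}` propagates.
-/

noncomputable section

/-- The spherical polynomials `Pₙ` for the parameter `q`:
`P₀ = 1`, `P₁ = X`, `P_{n+2}(x) = ((q+1)/q)·x·P_{n+1}(x) − (1/q)·Pₙ(x)`. -/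
def P (q : ℝ) : ℕ → ℝ → ℝ
  | 0 => fun _ => 1
  | 1 => fun s => s
  | (n + 2) => fun s => ((q + 1) / q) * s * P q (n + 1) s - (1 / q) * P q n s

section SphericalPolynomials

variable {q : ℝ}

@[simp] theorem P_zero (q s : ℝ) : P q 0 s = 1 := rfl

@[simp] theorem P_one (q s : ℝ) : P q 1 s = s := rfl

theorem P_add_two (q : ℝ) (n : ℕ) :
    P q (n + 2) = fun s => ((q + 1) / q) * s * P q (n + 1) s - (1 / q) * P q n s := rfl

theorem mul_P_add_two (hq : q ≠ 0) (n : ℕ) (s : ℝ) :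
    q * P q (n + 2) s = (q + 1) * s * P q (n + 1) s - P q n s := by
  rw [P_add_two]
  field_simp

theorem P_neg (q s : ℝ) : ∀ n, P q n (-s) = (-1) ^ n * P q n s
  | 0 => by simp
  | 1 => by simp
  | n + 2 => by
    simp only [P_add_two, P_neg q s n, P_neg q s (n + 1)]
    ring

theorem abs_P_neg (q s : ℝ) (n : ℕ) : |P q n (-s)| = |P q n s| := by
  simp [P_neg]

theorem P_apply_one (hq : q ≠ 0) : ∀ n, P q n 1 = 1
  | 0 => rfl
  | 1 => rfl
  | n + 2 => by
    simp only [P_add_two, P_apply_one hq n, P_apply_one hq (n + 1)]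
    field_simp
    ring

theorem differentiable_P (q : ℝ) : ∀ n, Differentiable ℝ (P q n)
  | 0 => differentiable_const 1
  | 1 => differentiable_id
  | n + 2 => by
    have h₀ := differentiable_P q n
    have h₁ := differentiable_P q (n + 1)
    rw [P_add_two]
    fun_prop

theorem mul_deriv_P_add_two_one (hq : q ≠ 0) (n : ℕ) :
    q * deriv (P q (n + 2)) 1 = (q + 1) * (1 + deriv (P q (n + 1)) 1) - deriv (P q n) 1 := by
  have h : HasDerivAt (P q (n + 2)) _ 1 :=
    (((hasDerivAt_id' (1 : ℝ)).const_mul ((q + 1) / q)).mul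
      (differentiable_P q (n + 1) 1).hasDerivAt).sub
      ((differentiable_P q n 1).hasDerivAt.const_mul (1 / q))
  rw [h.deriv, P_apply_one hq]
  field_simp

theorem P_energy (hq : q ≠ 0) (s : ℝ) : ∀ n : ℕ,
    q * P q (n + 1) s ^ 2 - (q + 1) * s * P q n s * P q (n + 1) s + P q n s ^ 2
      = (1 - s ^ 2) / q ^ n
  | 0 => by simp; ring
  | n + 1 => by
    have ih := P_energy hq s n
    have h := mul_P_add_two hq n s
    have h_step : q * (q * P q (n + 2) s ^ 2 - (q + 1) * s * P q (n + 1) s * P q (n + 2) s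
        + P q (n + 1) s ^ 2) = q * P q (n + 1) s ^ 2 - (q + 1) * s * P q n s * P q (n + 1) s
        + P q n s ^ 2 := by
      linear_combination (q * P q (n + 2) s - P q n s) * h
    rw [ih] at h_step
    rw [pow_succ q n, ← div_div, ← h_step, mul_div_cancel_left₀ _ hq]

theorem sq_le_one_of_elliptic_energy {q s x y c : ℝ} (hq : 3 ≤ q)
    (hell : ((q + 1) * s) ^ 2 ≤ 4 * q) (hx : x ^ 2 ≤ 1) (hc : c ≤ 1)
    (henergy : q * y ^ 2 - (q + 1) * s * x * y + x ^ 2 = c * (1 - s ^ 2)) : y ^ 2 ≤ 1 := by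
  have hs : s ^ 2 ≤ 1 := by
    have : (q + 1) ^ 2 * s ^ 2 ≤ (q + 1) ^ 2 * 1 := by nlinarith [sq_nonneg (q - 1)]
    exact le_of_mul_le_mul_left this (by positivity)
  have h_square : (2 * q * y - (q + 1) * s * x) ^ 2 ≤ 4 * q * (1 - s ^ 2) := by
    nlinarith [mul_nonneg (sub_nonneg.2 hell) (sq_nonneg x),
      mul_le_mul_of_nonneg_right hc (sub_nonneg.2 hs)]
  have h_lin : ((q + 1) * s * x) ^ 2 ≤ ((q + 1) * s) ^ 2 := by
    nlinarith [mul_nonneg (sq_nonneg ((q + 1) * s)) (sub_nonneg.2 hx)]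
  have h_y : (2 * q * y) ^ 2 ≤ 2 * ((q + 1) * s) ^ 2 + 8 * q * (1 - s ^ 2) := by
    nlinarith [sq_nonneg (2 * q * y - 2 * (q + 1) * s * x)]
  -- `2((q + 1)s)² + 8q(1 - s²) ≤ 4q²` on the elliptic range is where `q ≥ 3` enters
  nlinarith [mul_nonneg (sub_nonneg.2 hell) (sq_nonneg (q - 1))]

theorem abs_P_le_one_of_elliptic {s : ℝ} (hq : 3 ≤ q) (hell : ((q + 1) * s) ^ 2 ≤ 4 * q) :
    ∀ n, |P q n s| ≤ 1
  | 0 => by simp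
  | n + 1 => by
    have hq₀ : q ≠ 0 := by positivity
    have hc : 1 / q ^ n ≤ 1 := div_le_one_of_le₀ (one_le_pow₀ (by linarith)) (by positivity)
    have ih := (sq_le_one_iff_abs_le_one _).2 (abs_P_le_one_of_elliptic hq hell n)
    rw [← sq_le_one_iff_abs_le_one]
    exact sq_le_one_of_elliptic_energy hq hell ih hc (by rw [P_energy hq₀ s n]; ring)

theorem nonneg_of_two_step_ge {r c : ℝ} (hr : 0 ≤ r) (hc : c ≤ r ^ 2) {u : ℕ → ℝ}
    (hu : ∀ n, 2 * r * u (n + 1) - c * u n ≤ u (n + 2)) (h₀ : 0 ≤ u 0) (h₁ : r * u 0 ≤ u 1)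
    (n : ℕ) : 0 ≤ u n := by
  have key : ∀ n, 0 ≤ u n ∧ r * u n ≤ u (n + 1) := by
    intro n
    induction n with
    | zero => exact ⟨h₀, h₁⟩
    | succ n ih =>
      obtain ⟨hn, hn₁⟩ := ih
      refine ⟨le_trans (mul_nonneg hr hn) hn₁, ?_⟩
      nlinarith [hu n, mul_le_mul_of_nonneg_left hn₁ hr, mul_le_mul_of_nonneg_right hc hn]
  exact (key n).1

theorem abs_P_le_one_of_hyperbolic {s : ℝ} (hq : 1 ≤ q) (hs₀ : 0 ≤ s) (hs₁ : s ≤ 1)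
    (hhyp : 4 * q ≤ ((q + 1) * s) ^ 2) (n : ℕ) : |P q n s| ≤ 1 := by
  have hq₀ : 0 < q := by linarith
  set r := (q + 1) * s / (2 * q) with hr
  have hr₀ : 0 ≤ r := by positivity
  have hc : 1 / q ≤ r ^ 2 := by
    rw [hr, div_pow, le_div_iff₀ (by positivity)]
    field_simp
    nlinarith
  have h_rec : ∀ n, P q (n + 2) s = 2 * r * P q (n + 1) s - 1 / q * P q n s := by
    intro n
    rw [P_add_two, hr]
    field_simp
  have h_drift : 2 * r ≤ 1 + 1 / q := by
    rw [hr]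
    field_simp
    nlinarith
  have h_start : 2 * r ≤ 1 + s := by
    rw [hr]
    field_simp
    nlinarith
  have h_upper := nonneg_of_two_step_ge hr₀ hc (u := fun n => 1 - P q n s)
    (fun n => by simp only [h_rec]; linarith) (by simp) (by simpa using hs₁)
  have h_lower := nonneg_of_two_step_ge hr₀ hc (u := fun n => 1 + P q n s)
    (fun n => by simp only [h_rec]; linarith) (by norm_num) (by simp; linarith)
  exact abs_le.2 ⟨by linarith [h_lower n], by linarith [h_upper n]⟩

theorem abs_P_le_one {s : ℝ} (hq : 3 ≤ q) (hs : |s| ≤ 1) (n : ℕ) : |P q n s| ≤ 1 := by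
  wlog hs₀ : 0 ≤ s generalizing s
  · rw [← abs_P_neg]
    exact this (by rwa [abs_neg]) (by linarith)
  rcases le_total (((q + 1) * s) ^ 2) (4 * q) with hell | hhyp
  · exact abs_P_le_one_of_elliptic hq hell n
  · exact abs_P_le_one_of_hyperbolic (by linarith) hs₀ (abs_le.1 hs).2 hhyp n

/-- `(1 - s) (ψ₁ - ψ_s)` on words of length `n`. -/
def psiGap (q : ℝ) (n : ℕ) (s : ℝ) : ℝ :=
  (1 - s) * deriv (P q n) 1 - (1 - P q n s)

theorem psiGap_zero (q s : ℝ) : psiGap q 0 s = 0 := by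
  simp [psiGap, show P q 0 = fun _ => 1 from rfl]

theorem psiGap_one (q s : ℝ) : psiGap q 1 s = 0 := by
  simp [psiGap, show P q 1 = id from rfl]

theorem mul_psiGap_add_two (hq : q ≠ 0) (n : ℕ) (s : ℝ) :
    q * psiGap q (n + 2) s =
      (q + 1) * psiGap q (n + 1) s - psiGap q n s + (q + 1) * (1 - s) * (1 - P q (n + 1) s) := by
  simp only [psiGap]
  linear_combination (1 - s) * mul_deriv_P_add_two_one hq n + mul_P_add_two hq n s

theorem psiGap_le_succ {s : ℝ} (hq : 0 < q) (hs : s ≤ 1) (hP : ∀ n, P q n s ≤ 1) :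
    ∀ n, psiGap q n s ≤ psiGap q (n + 1) s
  | 0 => by rw [psiGap_zero, psiGap_one]
  | n + 1 => by
    have ih := psiGap_le_succ hq hs hP n
    have h_rec := mul_psiGap_add_two hq.ne' n s
    have h_src : 0 ≤ (q + 1) * (1 - s) * (1 - P q (n + 1) s) :=
      mul_nonneg (mul_nonneg (by linarith) (sub_nonneg.2 hs)) (sub_nonneg.2 (hP (n + 1)))
    nlinarith

theorem psiGap_nonneg {s : ℝ} (hq : 0 < q) (hs : s ≤ 1) (hP : ∀ n, P q n s ≤ 1) (n : ℕ) :
    0 ≤ psiGap q n s :=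
  psiGap_zero q s ▸ monotone_nat_of_le_succ (psiGap_le_succ hq hs hP) (Nat.zero_le n)

end SphericalPolynomials

theorem psi_s_le_psi_one_general (q : ℕ) (hq3 : 3 ≤ q) (n : ℕ)
    (s : ℝ) (hs : s ∈ Set.Ico (-1 : ℝ) 1) :
    (1 - P (q : ℝ) n s) / (1 - s) ≤ deriv (P (q : ℝ) n) 1 := by
  obtain ⟨hs₁, hs₂⟩ := hs
  have hq : (3 : ℝ) ≤ q := by exact_mod_cast hq3
  have hP : ∀ m, P q m s ≤ 1 := fun m =>
    (abs_le.1 (abs_P_le_one hq (abs_le.2 ⟨hs₁, hs₂.le⟩) m)).2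
  have h_gap := psiGap_nonneg (by linarith) hs₂.le hP n
  rw [psiGap] at h_gap
  rw [div_le_iff₀ (sub_pos.2 hs₂)]
  linarith

theorem psi_s_le_psi_one (q : ℕ) (hq3 : 3 ≤ q) (hqodd : Odd q) (n : ℕ)
    (s : ℝ) (hs : s ∈ Set.Ico (-1 : ℝ) 1) :
    (1 - P (q : ℝ) n s) / (1 - s) ≤ deriv (P (q : ℝ) n) 1 :=
  psi_s_le_psi_one_general q hq3 n s hs
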